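/- Let 0 ≤ k < n and let ω be a nonnegative, decomposable, normalized element of Λᵏ(ℝⁿ). Then there exists a vector v ∈ ℝⁿ such that v ∧ ω is a nonzero nonnegative element of Λᵏ⁺¹(ℝⁿ). -/

import Mathlib

open ExteriorAlgebra

noncomputable section

/-- The basis `k`-vector `e_A`, the wedge of the standard basis vectors indexed by `A`
in increasing order. -/
def eWedge (n : ℕ) (A : Finset (Fin n)) : ExteriorAlgebra ℝ (Fin n → ℝ) :=
  ((A.sort (· ≤ ·)).map fun i => ι ℝ (Pi.single i (1 : ℝ))).prod

/-- `ω ∈ Λᵏ(ℝⁿ)` has coordinates `c` with respect to the basis `{e_A}`. -/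
def HasCoords {n k : ℕ} (ω : ⋀[ℝ]^k (Fin n → ℝ))
    (c : {A : Finset (Fin n) // A.card = k} → ℝ) : Prop :=
  (ω : ExteriorAlgebra ℝ (Fin n → ℝ)) =
    ∑ A : {A : Finset (Fin n) // A.card = k}, c A • eWedge n A.1

/-- `ω` is nonnegative: all its coordinates are nonnegative. -/
def IsNonneg {n k : ℕ} (ω : ⋀[ℝ]^k (Fin n → ℝ)) : Prop :=
  ∃ c, HasCoords ω c ∧ ∀ A, 0 ≤ c A

/-- `ω` is positive: all its coordinates are positive. -/
def IsPositive {n k : ℕ} (ω : ⋀[ℝ]^k (Fin n → ℝ)) : Prop :=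
  ∃ c, HasCoords ω c ∧ ∀ A, 0 < c A

/-- `ω` is normalized: its coordinates sum to `1`. -/
def IsNormalized {n k : ℕ} (ω : ⋀[ℝ]^k (Fin n → ℝ)) : Prop :=
  ∃ c, HasCoords ω c ∧ ∑ A, c A = 1

/-- `ω` is decomposable: it is a wedge of `k` vectors of `ℝⁿ`. -/
def IsDecomposable {n k : ℕ} (ω : ⋀[ℝ]^k (Fin n → ℝ)) : Prop :=
  ∃ v : Fin k → (Fin n → ℝ), (ω : ExteriorAlgebra ℝ (Fin n → ℝ)) = ιMulti ℝ k v

/-!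
Let `i` be the least index missing from some `A` in the support of `ω`. Every support set then
contains `0, …, i - 1`, so `e_i ∧ e_A` is `0` when `i ∈ A` and `(-1)^i e_{A ∪ {i}}` otherwise,
with a sign that does not depend on `A`. Hence for `v = (-1)^i e_i` the coordinates of `v ∧ ω`
are those of `ω` moved from `A` to `A ∪ {i}`: nonnegative, and nonzero at `A ∪ {i}` for the
support set `A` missing `i`.
-/

open Finset

theorem Finset.sort_union_of_forall_lt {α : Type*} [LinearOrder α] {s t : Finset α}
    (h : ∀ x ∈ s, ∀ y ∈ t, x < y) :
    (s ∪ t).sort (· ≤ ·) = s.sort (· ≤ ·) ++ t.sort (· ≤ ·) := by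
  have hst : Disjoint s t := disjoint_left.mpr fun a ha hat => (h a ha a hat).false
  refine List.Perm.eq_of_pairwise' (pairwise_sort _ _) ?_ ?_
  · exact List.pairwise_append.mpr ⟨pairwise_sort _ _, pairwise_sort _ _,
      fun x hx y hy => (h x ((mem_sort _).mp hx) y ((mem_sort _).mp hy)).le⟩
  · rw [← Multiset.coe_eq_coe, ← Multiset.coe_add, sort_eq, sort_eq, sort_eq,
      ← disjUnion_eq_union s t hst, disjUnion_val]

theorem ExteriorAlgebra.ι_mul_prod_map_ι {R M β : Type*} [CommRing R] [AddCommGroup M]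
    [Module R M] (x : M) (f : β → M) :
    ∀ l : List β, ι R x * (l.map fun b => ι R (f b)).prod =
      (-1 : R) ^ l.length • ((l.map fun b => ι R (f b)).prod * ι R x)
  | [] => by simp
  | b :: l => by
    have hswap : ι R x * ι R (f b) = -(ι R (f b) * ι R x) :=
      eq_neg_of_add_eq_zero_left (ι_add_mul_swap x (f b))
    rw [List.map_cons, List.prod_cons, ← mul_assoc, hswap, neg_mul, mul_assoc,
      ι_mul_prod_map_ι x f l, mul_smul_comm, List.length_cons, pow_succ, mul_neg_one,
      neg_smul, mul_assoc]

theorem ι_single_mul_eWedge_of_notMem {n : ℕ} {i : Fin n} {A : Finset (Fin n)} (hi : i ∉ A) :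
    ι ℝ (Pi.single i 1) * eWedge n A =
      (-1 : ℝ) ^ #{a ∈ A | a < i} • eWedge n (insert i A) := by
  set s := {a ∈ A | a < i}
  set t := {a ∈ A | ¬a < i}
  have hst : ∀ x ∈ s, ∀ y ∈ t, x < y := fun x hx y hy =>
    (mem_filter.mp hx).2.trans_le (not_lt.mp (mem_filter.mp hy).2)
  have hsort : A.sort (· ≤ ·) = s.sort (· ≤ ·) ++ t.sort (· ≤ ·) := by
    rw [← sort_union_of_forall_lt hst, filter_union_filter_not_eq]
  have hsort_insert :
      (insert i A).sort (· ≤ ·) = s.sort (· ≤ ·) ++ i :: t.sort (· ≤ ·) := by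
    have hit : i ∉ t := fun h => hi (mem_filter.mp h).1
    have hsi : ∀ x ∈ s, ∀ y ∈ insert i t, x < y := fun x hx y hy => by
      rcases mem_insert.mp hy with rfl | hy
      exacts [(mem_filter.mp hx).2, hst x hx y hy]
    rw [← sort_insert _ (fun b hb => not_lt.mp (mem_filter.mp hb).2) hit,
      ← sort_union_of_forall_lt hsi, union_insert, filter_union_filter_not_eq]
  rw [eWedge, eWedge, hsort, hsort_insert, List.map_append, List.prod_append, List.map_append,
    List.map_cons, List.prod_append, List.prod_cons, ← mul_assoc, ι_mul_prod_map_ι,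
    length_sort, smul_mul_assoc, mul_assoc]

theorem ι_single_mul_eWedge_of_mem {n : ℕ} {i : Fin n} {A : Finset (Fin n)} (hi : i ∈ A) :
    ι ℝ (Pi.single i 1) * eWedge n A = 0 := by
  have hA : eWedge n A = (-1 : ℝ) ^ #{a ∈ A.erase i | a < i} •
      (ι ℝ (Pi.single i 1) * eWedge n (A.erase i)) := by
    rw [ι_single_mul_eWedge_of_notMem (notMem_erase i A), insert_erase hi, smul_smul,
      ← mul_pow, neg_one_mul, neg_neg, one_pow, one_smul]
  rw [hA, mul_smul_comm, ← mul_assoc, ι_sq_zero, zero_mul, smul_zero]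

theorem eWedge_eq_basis {n : ℕ} (A : Finset (Fin n)) :
    eWedge n A = (Pi.basisFun ℝ (Fin n)).ExteriorAlgebra A := by
  rw [basis_apply_ofCard _ rfl, ιMulti_family, ιMulti_apply, eWedge]
  congr 1
  apply List.ext_getElem <;> simp [Set.powersetCard.ofFinEmbEquiv_symm_apply,
    orderEmbOfFin_apply]

theorem linearIndependent_eWedge (n k : ℕ) :
    LinearIndependent ℝ fun A : {A : Finset (Fin n) // #A = k} => eWedge n A.1 := by
  simp only [eWedge_eq_basis]
  exact (Module.Basis.linearIndependent _).comp _ Subtype.val_injective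

theorem HasCoords.unique {n k : ℕ} {ω : ⋀[ℝ]^k (Fin n → ℝ)}
    {c c' : {A : Finset (Fin n) // #A = k} → ℝ} (h : HasCoords ω c) (h' : HasCoords ω c') :
    c = c' :=
  funext <|
    Fintype.linearIndependent_iffₛ.mp (linearIndependent_eWedge n k) c c' (h.symm.trans h')

theorem HasCoords.ne_zero {n k : ℕ} {ω : ⋀[ℝ]^k (Fin n → ℝ)}
    {c : {A : Finset (Fin n) // #A = k} → ℝ} (h : HasCoords ω c) (hc : c ≠ 0) : ω ≠ 0 := by
  rintro rfl
  exact hc (h.unique (by simp [HasCoords]))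

theorem Finset.exists_least_notMem {α : Type*} [LinearOrder α] [WellFoundedLT α]
    (P : Finset α → Prop) (h : ∃ A, P A ∧ ∃ j, j ∉ A) :
    ∃ i, (∃ A, P A ∧ i ∉ A) ∧ ∀ A, P A → ∀ j < i, j ∈ A := by
  obtain ⟨A, hA, j, hj⟩ := h
  obtain ⟨i, hi, hmin⟩ := wellFounded_lt.has_min {i | ∃ A, P A ∧ i ∉ A} ⟨j, A, hA, hj⟩
  exact ⟨i, hi, fun B hB j hj => by_contra fun hjB => hmin j ⟨B, hB, hjB⟩ hj⟩

theorem Fin.card_filter_lt_of_forall_lt_mem {n : ℕ} {i : Fin n} {A : Finset (Fin n)}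
    (h : ∀ j < i, j ∈ A) : #{a ∈ A | a < i} = i := by
  rw [← Fin.card_Iio i]
  congr 1
  ext j
  simpa using fun hj => h j hj

theorem Finset.sum_card_eq_sum_card_succ_insert {α M : Type*} [Fintype α] [DecidableEq α]
    [AddCommMonoid M] (i : α) {k : ℕ} (f : {A : Finset α // #A = k} → Finset α → M) :
    ∑ A : {A : Finset α // #A = k}, (if i ∈ A.1 then 0 else f A (insert i A.1)) =
      ∑ B : {B : Finset α // #B = k + 1},
        if h : i ∈ B.1 then f ⟨B.1.erase i, by simp [card_erase_of_mem h, B.2]⟩ B.1 else 0 := by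
  refine sum_bij_ne_zero
    (fun A _ hA => ⟨insert i A.1, by rw [card_insert_of_notMem (fun hi => hA (if_pos hi)), A.2]⟩)
    (fun _ _ _ => mem_univ _) ?_ ?_ ?_
  · intro A _ hA A' _ hA' hAA'
    have hi : i ∉ A.1 := fun hi => hA (if_pos hi)
    have hi' : i ∉ A'.1 := fun hi => hA' (if_pos hi)
    exact Subtype.ext (by simpa [hi, hi'] using congrArg (fun B => Finset.erase B.1 i) hAA')
  · intro B _ hB
    have hi : i ∈ B.1 := by by_contra hi; exact hB (dif_neg hi)
    refine ⟨⟨B.1.erase i, by simp [card_erase_of_mem hi, B.2]⟩, mem_univ _, ?_, ?_⟩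
    · simpa [hi] using hB
    · exact Subtype.ext (insert_erase hi)
  · intro A _ hA
    have hi : i ∉ A.1 := fun hi => hA (if_pos hi)
    simp [hi]

def insertCoords {n k : ℕ} (i : Fin n) (c : {A : Finset (Fin n) // #A = k} → ℝ)
    (B : {B : Finset (Fin n) // #B = k + 1}) : ℝ :=
  if h : i ∈ B.1 then c ⟨B.1.erase i, by simp [card_erase_of_mem h, B.2]⟩ else 0

theorem ι_mul_eq_sum_insertCoords {n k : ℕ} {ω : ⋀[ℝ]^k (Fin n → ℝ)}
    {c : {A : Finset (Fin n) // #A = k} → ℝ} (hω : HasCoords ω c) {i : Fin n}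
    (hi : ∀ A, c A ≠ 0 → ∀ j < i, j ∈ A.1) :
    ι ℝ ((-1 : ℝ) ^ (i : ℕ) • Pi.single i 1) * (ω : ExteriorAlgebra ℝ (Fin n → ℝ)) =
      ∑ B, insertCoords i c B • eWedge n B.1 := by
  have hterm : ∀ A, ι ℝ ((-1 : ℝ) ^ (i : ℕ) • Pi.single i 1) * (c A • eWedge n A.1) =
      if i ∈ A.1 then 0 else c A • eWedge n (insert i A.1) := by
    intro A
    by_cases hcA : c A = 0
    · simp [hcA]
    split_ifs with hiA
    · rw [mul_smul_comm, map_smul, smul_mul_assoc, ι_single_mul_eWedge_of_mem hiA, smul_zero,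
        smul_zero]
    · rw [mul_smul_comm, map_smul, smul_mul_assoc, ι_single_mul_eWedge_of_notMem hiA,
        Fin.card_filter_lt_of_forall_lt_mem (hi A hcA), smul_smul ((-1 : ℝ) ^ (i : ℕ)),
        ← mul_pow, neg_one_mul, neg_neg, one_pow, one_smul]
  rw [hω, mul_sum, sum_congr rfl fun A _ => hterm A,
    sum_card_eq_sum_card_succ_insert i fun A B => c A • eWedge n B]
  refine sum_congr rfl fun B _ => ?_
  unfold insertCoords
  split_ifs <;> simp

theorem ι_mul_mem_exteriorPower {R M : Type*} [CommRing R] [AddCommGroup M] [Module R M]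
    {k : ℕ} (v : M) (ω : ⋀[R]^k M) : ι R v * (ω : ExteriorAlgebra R M) ∈ ⋀[R]^(k + 1) M := by
  rw [add_comm]
  exact SetLike.GradedMul.mul_mem (by simp) ω.2

theorem nonneg_contained_in_nonneg_general (n k : ℕ) (hkn : k < n)
    (ω : ⋀[ℝ]^k (Fin n → ℝ))
    (hnn : IsNonneg ω) (hnorm : IsNormalized ω) :
    ∃ (v : Fin n → ℝ) (η : ⋀[ℝ]^(k+1) (Fin n → ℝ)),
      (η : ExteriorAlgebra ℝ (Fin n → ℝ)) =
        ι ℝ v * (ω : ExteriorAlgebra ℝ (Fin n → ℝ)) ∧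
      η ≠ 0 ∧ IsNonneg η := by
  obtain ⟨c, hc, hc_nonneg⟩ := hnn
  obtain ⟨c', hc', hc'_sum⟩ := hnorm
  obtain rfl := hc.unique hc'
  obtain ⟨A₀, -, hA₀⟩ := exists_ne_zero_of_sum_ne_zero (hc'_sum ▸ one_ne_zero)
  obtain ⟨j, -, hj⟩ :=
    exists_mem_notMem_of_card_lt_card (s := A₀.1) (t := univ) (by simpa [A₀.2] using hkn)
  obtain ⟨i, ⟨A, hA, hiA⟩, hpivot⟩ :=
    exists_least_notMem (fun A => ∃ hA : #A = k, c ⟨A, hA⟩ ≠ 0) ⟨A₀.1, ⟨A₀.2, hA₀⟩, j, hj⟩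
  set v : Fin n → ℝ := (-1 : ℝ) ^ (i : ℕ) • Pi.single i 1
  have hη : HasCoords (⟨_, ι_mul_mem_exteriorPower v ω⟩ : ⋀[ℝ]^(k + 1) (Fin n → ℝ))
      (insertCoords i c) :=
    ι_mul_eq_sum_insertCoords hc fun A hA => hpivot A.1 ⟨A.2, hA⟩
  refine ⟨v, _, rfl, hη.ne_zero ?_, insertCoords i c, hη, ?_⟩
  · obtain ⟨hAk, hA⟩ := hA
    refine Function.ne_iff.mpr ⟨⟨insert i A, by rw [card_insert_of_notMem hiA, hAk]⟩, ?_⟩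
    simp [insertCoords, hiA, hA]
  · intro B
    unfold insertCoords
    split_ifs <;> simp [hc_nonneg]

/-- Lemma 1.2 (first part): a nonnegative, decomposable, normalized element
`ω ∈ Λᵏ(ℝⁿ)` with `k < n` is contained in a nonzero nonnegative `(k+1)`-vector,
namely `v ∧ ω` for a suitable vector `v`. -/
theorem nonneg_contained_in_nonneg (n k : ℕ) (hkn : k < n)
    (ω : ⋀[ℝ]^k (Fin n → ℝ))
    (hnn : IsNonneg ω) (hdec : IsDecomposable ω) (hnorm : IsNormalized ω) :
    ∃ (v : Fin n → ℝ) (η : ⋀[ℝ]^(k+1) (Fin n → ℝ)),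
      (η : ExteriorAlgebra ℝ (Fin n → ℝ)) =
        ι ℝ v * (ω : ExteriorAlgebra ℝ (Fin n → ℝ)) ∧
      η ≠ 0 ∧ IsNonneg η :=
  nonneg_contained_in_nonneg_general n k hkn ω hnn hnorm
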